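/- arXiv:math-ph/0210020 — 8 statements merged into one kernel-verified Lean document; each statement's English description precedes it below -/
import Mathlib

section
/- Let h > 0 and Γ : ξ × ξ → ℂ with ‖Γ‖⁽²⁾ ≤ h². Let (f_n)_{n∈ℕ} be a family of functions f_n : ξ^n × ξ^n → ℂ with f_n = 0 for all but finitely many n, and let (ε_n)_{n∈ℕ} be any signs ε_n ∈ {−1,+1}. Then | Σ_{n∈ℕ} (ε_n/(n!)²) Σ_{x∈ξ^n, x̄∈ξ^n} f_n(x,x̄) · det[(Γ(x_i, x̄_j))_{1≤i,j≤n}] | ≤ Σ_{n∈ℕ} (h^{2n}/(n!)²) ‖f_n‖₁, where for n = 0 the determinant is 1. -/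
/-!
Since `|ε_n| = 1`, the bound holds term by term once `|det[Γ(x_i, x̄_j)]| ≤ ‖Γ‖⁽²⁾ⁿ ≤ h^{2n}`.
If `x̄` has a repeated entry the determinant vanishes. Otherwise Hadamard's inequality bounds it
by the product of the Euclidean norms of its rows, and the row indexed by `x_i` is part of the
row `Γ(x_i, ·)`, of norm at most `‖Γ‖⁽²⁾`. Hadamard's inequality itself comes from Gram–Schmidt:
in the orthonormalisation `b` of the rows `v`, the rows form a triangular matrix with diagonal
entries `⟪b_i, v_i⟫` of modulus at most `‖v_i‖`, and the change of basis to `b` is unitary.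
-/

/-- The norm `‖Γ‖⁽²⁾ = max_ζ (Σ_{ζ'} |Γ(ζ,ζ')|²)^{1/2}`. -/
noncomputable def twoNorm (ξ : Type*) [Fintype ξ] [Nonempty ξ] (Γ : ξ × ξ → ℂ) : ℝ :=
  Finset.univ.sup' Finset.univ_nonempty fun ζ =>
    Real.sqrt (∑ ζ' : ξ, ‖Γ (ζ, ζ')‖ ^ 2)

theorem OrthonormalBasis.norm_det_le_prod_norm {ι 𝕜 E : Type*} [Fintype ι] [DecidableEq ι]
    [RCLike 𝕜] [NormedAddCommGroup E] [InnerProductSpace 𝕜 E]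
    (e : OrthonormalBasis ι 𝕜 E) (v : ι → E) :
    ‖e.toBasis.det v‖ ≤ ∏ i, ‖v i‖ := by
  let : LinearOrder ι := LinearOrder.lift' _ (Fintype.equivFin ι).injective
  let : LocallyFiniteOrderBot ι :=
    .ofIic ι (fun a => Finset.univ.filter (· ≤ a)) (by simp)
  have : FiniteDimensional 𝕜 E := e.toBasis.finiteDimensional_of_finite
  have hdim : Module.finrank 𝕜 E = Fintype.card ι := Module.finrank_eq_card_basis e.toBasis
  set b := InnerProductSpace.gramSchmidtOrthonormalBasis hdim v
  have hdet : e.toBasis.det v = e.toBasis.det b * b.toBasis.det v := by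
    conv_lhs => rw [e.toBasis.det.eq_smul_basis_det b.toBasis]
    simp
  rw [hdet, norm_mul, e.det_to_matrix_orthonormalBasis b, one_mul,
    InnerProductSpace.gramSchmidtOrthonormalBasis_det, norm_prod]
  gcongr with i
  simpa [b.orthonormal.1 i] using norm_inner_le_norm (𝕜 := 𝕜) (b i) (v i)

theorem Matrix.norm_det_le_prod_sqrt_sum_norm_sq {n 𝕜 : Type*} [Fintype n] [DecidableEq n]
    [RCLike 𝕜] (M : Matrix n n 𝕜) :
    ‖M.det‖ ≤ ∏ i, √(∑ j, ‖M i j‖ ^ 2) := by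
  have h := (EuclideanSpace.basisFun n 𝕜).norm_det_le_prod_norm fun i => WithLp.toLp 2 (M i)
  rw [Module.Basis.det_apply, ← Matrix.det_transpose] at h
  simp only [EuclideanSpace.norm_eq] at h
  exact h

section twoNorm

variable {ξ : Type*} [Fintype ξ] [Nonempty ξ] (Γ : ξ × ξ → ℂ)

theorem sqrt_sum_norm_sq_le_twoNorm (ζ : ξ) : √(∑ ζ', ‖Γ (ζ, ζ')‖ ^ 2) ≤ twoNorm ξ Γ :=
  Finset.le_sup' (fun ζ => √(∑ ζ', ‖Γ (ζ, ζ')‖ ^ 2)) (Finset.mem_univ ζ)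

theorem twoNorm_nonneg : 0 ≤ twoNorm ξ Γ :=
  (Real.sqrt_nonneg _).trans (sqrt_sum_norm_sq_le_twoNorm Γ (Classical.arbitrary ξ))

theorem norm_det_le_twoNorm_pow {ι : Type*} [Fintype ι] [DecidableEq ι] (x y : ι → ξ) :
    ‖(Matrix.of fun i j => Γ (x i, y j)).det‖ ≤ twoNorm ξ Γ ^ Fintype.card ι := by
  by_cases hy : Function.Injective y
  · calc ‖(Matrix.of fun i j => Γ (x i, y j)).det‖
        ≤ ∏ i, √(∑ j, ‖Γ (x i, y j)‖ ^ 2) := Matrix.norm_det_le_prod_sqrt_sum_norm_sq _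
      _ ≤ ∏ _i : ι, twoNorm ξ Γ := by
        gcongr with i
        refine le_trans (Real.sqrt_le_sqrt ?_) (sqrt_sum_norm_sq_le_twoNorm Γ (x i))
        calc ∑ j, ‖Γ (x i, y j)‖ ^ 2 = ∑ ζ' ∈ Finset.univ.map ⟨y, hy⟩, ‖Γ (x i, ζ')‖ ^ 2 :=
              by rw [Finset.sum_map]; rfl
          _ ≤ ∑ ζ', ‖Γ (x i, ζ')‖ ^ 2 := Finset.sum_le_univ_sum_of_nonneg fun _ => by positivity
      _ = twoNorm ξ Γ ^ Fintype.card ι := Finset.prod_const _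
  · obtain ⟨j₁, j₂, hy, hne⟩ := Function.not_injective_iff.mp hy
    rw [Matrix.det_zero_of_column_eq hne (by simp [hy]), norm_zero]
    exact pow_nonneg (twoNorm_nonneg Γ) _

end twoNorm

theorem norm_sum_sum_mul_le {α β : Type*} [Fintype α] [Fintype β] (g d : α → β → ℂ) {C : ℝ}
    (hd : ∀ x y, ‖d x y‖ ≤ C) :
    ‖∑ x, ∑ y, g x y * d x y‖ ≤ C * ∑ x, ∑ y, ‖g x y‖ := by
  simp only [Finset.mul_sum]
  refine (norm_sum_le _ _).trans (Finset.sum_le_sum fun x _ => ?_)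
  refine (norm_sum_le _ _).trans (Finset.sum_le_sum fun y _ => ?_)
  rw [norm_mul, mul_comm C]
  exact mul_le_mul_of_nonneg_left (hd x y) (norm_nonneg _)

theorem fermionic_gaussian_integral_bound_general (ξ : Type*) [Fintype ξ] [Nonempty ξ]
    (h : ℝ) (Γ : ξ × ξ → ℂ) (hΓ : twoNorm ξ Γ ≤ h ^ 2)
    (f : (n : ℕ) → (Fin n → ξ) → (Fin n → ξ) → ℂ)
    (hfin : {n : ℕ | f n ≠ 0}.Finite)
    (ε : ℕ → ℝ) (hε : ∀ n, ε n = 1 ∨ ε n = -1) :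
    ‖∑' n : ℕ, ((ε n : ℂ) / (Nat.factorial n : ℂ) ^ 2) *
        ∑ x : Fin n → ξ, ∑ y : Fin n → ξ,
          f n x y * (Matrix.of fun i j => Γ (x i, y j)).det‖ ≤
      ∑' n : ℕ, h ^ (2 * n) / (Nat.factorial n : ℝ) ^ 2 *
        ∑ x : Fin n → ξ, ∑ y : Fin n → ξ, ‖f n x y‖ := by
  have hsummable : Summable fun n : ℕ => h ^ (2 * n) / (Nat.factorial n : ℝ) ^ 2 *
      ∑ x : Fin n → ξ, ∑ y : Fin n → ξ, ‖f n x y‖ := by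
    refine summable_of_hasFiniteSupport (hfin.subset fun n hn hfn => hn ?_)
    simp [show f n = 0 from hfn]
  refine tsum_of_norm_bounded hsummable.hasSum fun n => ?_
  have hdet (x y : Fin n → ξ) : ‖(Matrix.of fun i j => Γ (x i, y j)).det‖ ≤ h ^ (2 * n) := by
    rw [pow_mul]
    simpa using (norm_det_le_twoNorm_pow Γ x y).trans
      (pow_le_pow_left₀ (twoNorm_nonneg Γ) hΓ _)
  have hε_norm : ‖(ε n : ℂ)‖ = 1 := by rcases hε n with hn | hn <;> simp [hn]
  rw [norm_mul, norm_div, hε_norm, norm_pow, Complex.norm_natCast, one_div_mul_eq_div,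
    div_mul_eq_mul_div]
  gcongr
  exact norm_sum_sum_mul_le _ _ hdet

/-- bound on fermionic Gaussian integrals via Hadamard's inequality,
`|Σ_n (ε_n/(n!)²) Σ_{x,x̄} f_n(x,x̄) det Γ(x_i,x̄_j)| ≤ Σ_n (h^{2n}/(n!)²) ‖f_n‖₁`. -/
theorem fermionic_gaussian_integral_bound (ξ : Type*) [Fintype ξ] [Nonempty ξ]
    (h : ℝ) (hh : 0 < h) (Γ : ξ × ξ → ℂ) (hΓ : twoNorm ξ Γ ≤ h ^ 2)
    (f : (n : ℕ) → (Fin n → ξ) → (Fin n → ξ) → ℂ)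
    (hfin : {n : ℕ | f n ≠ 0}.Finite)
    (ε : ℕ → ℝ) (hε : ∀ n, ε n = 1 ∨ ε n = -1) :
    ‖∑' n : ℕ, ((ε n : ℂ) / (Nat.factorial n : ℂ) ^ 2) *
        ∑ x : Fin n → ξ, ∑ y : Fin n → ξ,
          f n x y * (Matrix.of fun i j => Γ (x i, y j)).det‖ ≤
      ∑' n : ℕ, h ^ (2 * n) / (Nat.factorial n : ℝ) ^ 2 *
        ∑ x : Fin n → ξ, ∑ y : Fin n → ξ, ‖f n x y‖ :=
  fermionic_gaussian_integral_bound_general ξ h Γ hΓ f hfin ε hε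
end

section
/- Let R be an associative (possibly noncommutative) ℝ-algebra, S a finite type, Λ ⊆ S with complement Λᶜ, and T a real matrix indexed by S whose Λ×Λ submatrix T_Λ is invertible. Let ψ̄, ψ : S → R. Define β : Λ → R by β_i = −Σ_{k∈Λ} Σ_{j∈Λᶜ} (T_Λ⁻¹)_{ik} T_{kj} ψ_j, define β̄ : Λ → R by β̄_i = −Σ_{j∈Λᶜ} Σ_{k∈Λ} ψ̄_j T_{jk} (T_Λ⁻¹)_{ki}, and let R^Λ = T_{Λᶜ} − T_{ΛᶜΛ} T_Λ⁻¹ T_{ΛΛᶜ} be the Schur complement. Then Σ_{i,j∈S} T_{ij} ψ̄_i ψ_j = Σ_{i,j∈Λ} (T_Λ)_{ij} (ψ̄_i − β̄_i)(ψ_j − β_j) + Σ_{i,j∈Λᶜ} (R^Λ)_{ij} ψ̄_i ψ_j. -/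
/-!
Since real scalars are central in `R`, the form `∑ T i j • (ψb i * ψ j)` is `ψb ⬝ᵥ T' *ᵥ ψ` for the
image `T'` of `T` under `algebraMap ℝ R`. Splitting along `Λ` turns it into a `2 × 2` block form,
and completing the square with `A⁻¹` is then a matrix identity over an arbitrary ring: it only uses
`A * A⁻¹ = A⁻¹ * A = 1` and associativity of matrix–vector products, never commutativity of `R`.
-/

open Matrix

section Blocks

variable {R : Type*} [Ring R]

theorem dotProduct_mulVec_eq_sum_submatrix {S : Type*} [Fintype S] (p : S → Prop)
    [DecidablePred p] (M : Matrix S S R) (u v : S → R) :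
    u ⬝ᵥ M *ᵥ v =
      ((fun i : {x // p x} => u i) ⬝ᵥ M.submatrix Subtype.val Subtype.val *ᵥ
          fun j : {x // p x} => v j) +
        ((fun i : {x // p x} => u i) ⬝ᵥ M.submatrix Subtype.val Subtype.val *ᵥ
          fun j : {x // ¬ p x} => v j) +
        ((fun i : {x // ¬ p x} => u i) ⬝ᵥ M.submatrix Subtype.val Subtype.val *ᵥ
          fun j : {x // p x} => v j) +
        ((fun i : {x // ¬ p x} => u i) ⬝ᵥ M.submatrix Subtype.val Subtype.val *ᵥ
          fun j : {x // ¬ p x} => v j) := by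
  simp only [dotProduct, mulVec, submatrix_apply, ← Fintype.sum_subtype_add_sum_subtype p,
    mul_add, Finset.sum_add_distrib]
  abel

theorem dotProduct_mulVec_eq_completeSquare_add_schur {m n : Type*} [Fintype m] [Fintype n]
    [DecidableEq m] (A A' : Matrix m m R) (hAA' : A * A' = 1) (hA'A : A' * A = 1)
    (B : Matrix m n R) (C : Matrix n m R) (D : Matrix n n R) (u₁ v₁ : m → R) (u₂ v₂ : n → R) :
    u₁ ⬝ᵥ A *ᵥ v₁ + u₁ ⬝ᵥ B *ᵥ v₂ + u₂ ⬝ᵥ C *ᵥ v₁ + u₂ ⬝ᵥ D *ᵥ v₂ =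
      (u₁ + u₂ ᵥ* C ᵥ* A') ⬝ᵥ A *ᵥ (v₁ + A' *ᵥ B *ᵥ v₂) +
        u₂ ⬝ᵥ (D - C * A' * B) *ᵥ v₂ := by
  have hA'B : u₁ ⬝ᵥ A *ᵥ A' *ᵥ B *ᵥ v₂ = u₁ ⬝ᵥ B *ᵥ v₂ := by
    rw [mulVec_mulVec, mulVec_mulVec, hAA', Matrix.one_mul]
  have hCA' : u₂ ᵥ* C ᵥ* A' ⬝ᵥ A *ᵥ v₁ = u₂ ⬝ᵥ C *ᵥ v₁ := by
    rw [dotProduct_mulVec, vecMul_vecMul, vecMul_vecMul, hA'A, Matrix.mul_one, ← dotProduct_mulVec]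
  have hCA'B : u₂ ᵥ* C ᵥ* A' ⬝ᵥ A *ᵥ A' *ᵥ B *ᵥ v₂ = u₂ ⬝ᵥ (C * A' * B) *ᵥ v₂ := by
    rw [mulVec_mulVec, mulVec_mulVec, hAA', Matrix.one_mul, dotProduct_mulVec,
      vecMul_vecMul, vecMul_vecMul, ← dotProduct_mulVec, Matrix.mul_assoc]
  rw [mulVec_add, dotProduct_add, add_dotProduct, add_dotProduct, hA'B, hCA', hCA'B, sub_mulVec,
    dotProduct_sub]
  abel

end Blocks

section AlgebraMap

variable {K R : Type*} [CommSemiring K] [Semiring R] [Algebra K R] {m n : Type*}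

theorem mulVec_map_algebraMap_apply [Fintype n] (M : Matrix m n K) (v : n → R) (i : m) :
    (M.map (algebraMap K R) *ᵥ v) i = ∑ j, M i j • v j := by
  simp only [mulVec, dotProduct, map_apply, Algebra.smul_def]

theorem vecMul_map_algebraMap_apply [Fintype m] (M : Matrix m n K) (v : m → R) (j : n) :
    (v ᵥ* M.map (algebraMap K R)) j = ∑ i, M i j • v i := by
  simp only [vecMul, dotProduct, map_apply, Algebra.smul_def, Algebra.commutes]

theorem sum_sum_smul_mul_eq_dotProduct_mulVec [Fintype m] [Fintype n] (M : Matrix m n K)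
    (u : m → R) (v : n → R) :
    ∑ i, ∑ j, M i j • (u i * v j) = u ⬝ᵥ M.map (algebraMap K R) *ᵥ v := by
  simp only [dotProduct, mulVec_map_algebraMap_apply, Finset.mul_sum, mul_smul_comm]

end AlgebraMap

/-- splitting a fermionic quadratic form: completion of the square
with the Schur complement, in a possibly noncommutative ℝ-algebra. -/
theorem fermionic_quadratic_form_split
    {R : Type*} [Ring R] [Algebra ℝ R] {S : Type*} [Fintype S] [DecidableEq S]
    (Λ : S → Prop) [DecidablePred Λ] (T : Matrix S S ℝ)
    (hTinv : IsUnit (T.submatrix (Subtype.val : {x // Λ x} → S) Subtype.val).det)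
    (ψb ψ : S → R)
    (β βb : {x // Λ x} → R)
    (hβ : ∀ i, β i = -∑ k : {x // Λ x}, ∑ j : {x // ¬ Λ x},
      (((T.submatrix (Subtype.val : {x // Λ x} → S) Subtype.val)⁻¹ i k) * T k.1 j.1) • ψ j.1)
    (hβb : ∀ i, βb i = -∑ j : {x // ¬ Λ x}, ∑ k : {x // Λ x},
      (T j.1 k.1 * ((T.submatrix (Subtype.val : {x // Λ x} → S) Subtype.val)⁻¹ k i)) • ψb j.1)
    (RΛ : Matrix {x // ¬ Λ x} {x // ¬ Λ x} ℝ)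
    (hRΛ : RΛ = T.submatrix (Subtype.val : {x // ¬ Λ x} → S) Subtype.val -
      T.submatrix (Subtype.val : {x // ¬ Λ x} → S) (Subtype.val : {x // Λ x} → S) *
        (T.submatrix (Subtype.val : {x // Λ x} → S) Subtype.val)⁻¹ *
        T.submatrix (Subtype.val : {x // Λ x} → S) (Subtype.val : {x // ¬ Λ x} → S)) :
    ∑ i : S, ∑ j : S, T i j • (ψb i * ψ j) =
      (∑ i : {x // Λ x}, ∑ j : {x // Λ x},
        T.submatrix (Subtype.val : {x // Λ x} → S) Subtype.val i j •
          ((ψb i.1 - βb i) * (ψ j.1 - β j))) +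
      ∑ i : {x // ¬ Λ x}, ∑ j : {x // ¬ Λ x}, RΛ i j • (ψb i.1 * ψ j.1) := by
  set A := T.submatrix (Subtype.val : {x // Λ x} → S) Subtype.val
  set B := T.submatrix (Subtype.val : {x // Λ x} → S) (Subtype.val : {x // ¬ Λ x} → S)
  set C := T.submatrix (Subtype.val : {x // ¬ Λ x} → S) (Subtype.val : {x // Λ x} → S)
  set D := T.submatrix (Subtype.val : {x // ¬ Λ x} → S) Subtype.val
  have hψβ : (fun j => ψ j.1 - β j) =
      (fun j => ψ j.1) + A⁻¹.map (algebraMap ℝ R) *ᵥ B.map (algebraMap ℝ R) *ᵥ fun j => ψ j.1 := by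
    ext i
    simp only [hβ, sub_neg_eq_add, Pi.add_apply, mulVec_map_algebraMap_apply, Finset.smul_sum,
      smul_smul]
    rfl
  have hψbβb : (fun i => ψb i.1 - βb i) =
      (fun i => ψb i.1) +
        (fun i => ψb i.1) ᵥ* C.map (algebraMap ℝ R) ᵥ* A⁻¹.map (algebraMap ℝ R) := by
    ext i
    simp only [hβb, sub_neg_eq_add, Pi.add_apply, vecMul_map_algebraMap_apply, Finset.smul_sum,
      smul_smul]
    rw [Finset.sum_comm]
    simp only [mul_comm (T _ _)]
    rfl
  have hAA' : A.map (algebraMap ℝ R) * A⁻¹.map (algebraMap ℝ R) = 1 := by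
    rw [← Matrix.map_mul, mul_nonsing_inv A hTinv, Matrix.map_one _ (map_zero _) (map_one _)]
  have hA'A : A⁻¹.map (algebraMap ℝ R) * A.map (algebraMap ℝ R) = 1 := by
    rw [← Matrix.map_mul, nonsing_inv_mul A hTinv, Matrix.map_one _ (map_zero _) (map_one _)]
  -- In the statement `*` elaborates to `CStarMatrix`'s multiplication, which `Matrix.map_mul`
  -- does not match; re-elaborating here picks `Matrix`'s.
  have hRΛ' : RΛ = D - C * A⁻¹ * B := hRΛ
  rw [sum_sum_smul_mul_eq_dotProduct_mulVec T, sum_sum_smul_mul_eq_dotProduct_mulVec A,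
    sum_sum_smul_mul_eq_dotProduct_mulVec RΛ, dotProduct_mulVec_eq_sum_submatrix Λ, hψβ, hψbβb,
    hRΛ', Matrix.map_sub _ (map_sub _), Matrix.map_mul, Matrix.map_mul]
  exact dotProduct_mulVec_eq_completeSquare_add_schur _ _ hAA' hA'A _ _ _ _ _ _ _
end

section
/- Let V and W be finite-dimensional real inner product spaces, B : V → V a symmetric positive-definite linear operator, Q : V → W a linear map with adjoint Qᵀ : W → V, and c > 0. Set Δ# = B + c·QᵀQ (symmetric positive definite, hence invertible), H = c·(Δ#)⁻¹Qᵀ : W → V, and Δ̃ = c·id_W − c²·Q(Δ#)⁻¹Qᵀ : W → W. Then for all A ∈ W and A₀ ∈ V: (c/2)‖A − Q(A₀ + HA)‖² + ½⟨A₀ + HA, B(A₀ + HA)⟩ = ½⟨A, Δ̃A⟩ + ½⟨A₀, Δ#A₀⟩. -/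
local notation "⟪" x ", " y "⟫" => @inner ℝ _ _ x y

/-- exact diagonalization of the bosonic block-averaging quadratic form.
With `Δ# = B + c QᵀQ`, `G = (Δ#)⁻¹`, `H = c G Qᵀ` and `Δ̃ = c·id − c² Q G Qᵀ`, the change
of variables `A₀ → A₀ + H A` splits the quadratic form into a background piece and a
fluctuation piece. -/
theorem boson_quadratic_form_diagonalization {V W : Type*}
    [NormedAddCommGroup V] [InnerProductSpace ℝ V] [FiniteDimensional ℝ V]
    [NormedAddCommGroup W] [InnerProductSpace ℝ W] [FiniteDimensional ℝ W]
    (B : V →ₗ[ℝ] V)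
    (hBsymm : ∀ x y : V, ⟪B x, y⟫ = ⟪x, B y⟫)
    (hBpos : ∀ x : V, x ≠ 0 → 0 < ⟪x, B x⟫)
    (Q : V →ₗ[ℝ] W) (c : ℝ) (hc : 0 < c)
    (G : V →ₗ[ℝ] V)
    (hG1 : G ∘ₗ (B + c • (LinearMap.adjoint Q ∘ₗ Q)) = LinearMap.id)
    (hG2 : (B + c • (LinearMap.adjoint Q ∘ₗ Q)) ∘ₗ G = LinearMap.id)
    (A : W) (A₀ : V) :
    c / 2 * ‖A - Q (A₀ + (c • (G ∘ₗ LinearMap.adjoint Q)) A)‖ ^ 2 +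
        1 / 2 * ⟪A₀ + (c • (G ∘ₗ LinearMap.adjoint Q)) A,
          B (A₀ + (c • (G ∘ₗ LinearMap.adjoint Q)) A)⟫ =
      1 / 2 * ⟪A, (c • (LinearMap.id : W →ₗ[ℝ] W) -
          c ^ 2 • (Q ∘ₗ G ∘ₗ LinearMap.adjoint Q)) A⟫ +
        1 / 2 * ⟪A₀, (B + c • (LinearMap.adjoint Q ∘ₗ Q)) A₀⟫ := by
  set g : V := G (LinearMap.adjoint Q A) with hg
  have hBg : B g = LinearMap.adjoint Q A - c • (LinearMap.adjoint Q (Q g)) := by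
    have := congrArg (fun f => f (LinearMap.adjoint Q A)) hG2
    simp only [LinearMap.comp_apply, LinearMap.add_apply, LinearMap.smul_apply,
      LinearMap.id_apply] at this
    rw [← hg] at this
    linear_combination (norm := module) this
  have hm : ⟪A₀, B g⟫ = ⟪Q A₀, A⟫ - c * ⟪Q A₀, Q g⟫ := by
    rw [hBg, inner_sub_right, inner_smul_right, LinearMap.adjoint_inner_right,
      LinearMap.adjoint_inner_right]
  have hn : ⟪g, B g⟫ = ⟪Q g, A⟫ - c * ⟪Q g, Q g⟫ := by
    rw [hBg, inner_sub_right, inner_smul_right, LinearMap.adjoint_inner_right,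
      LinearMap.adjoint_inner_right]
  rw [← real_inner_self_eq_norm_sq]
  simp only [LinearMap.comp_apply, LinearMap.add_apply, LinearMap.smul_apply,
    LinearMap.sub_apply, LinearMap.id_apply, map_add, map_smul, ← hg,
    inner_sub_left, inner_sub_right, inner_add_left, inner_add_right,
    inner_smul_left, inner_smul_right, RingHom.id_apply,
    LinearMap.adjoint_inner_right, LinearMap.adjoint_inner_left]
  have hc1 : ⟪A₀, B g⟫ = ⟪g, B A₀⟫ := by rw [← hBsymm, real_inner_comm]
  have hc2 : ⟪A, Q A₀⟫ = ⟪Q A₀, A⟫ := real_inner_comm _ _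
  have hc3 : ⟪A, Q g⟫ = ⟪Q g, A⟫ := real_inner_comm _ _
  have hc4 : ⟪Q A₀, Q g⟫ = ⟪Q g, Q A₀⟫ := real_inner_comm _ _
  simp only [starRingEnd_apply, star_trivial]
  rw [hc2, hc3, hc4, ← hc1, hm, hn]
  linear_combination (-(c ^ 2)) * hc4
end

section
/- Let R be an associative (possibly noncommutative) ℂ-algebra, X and Y finite types, D a complex matrix indexed by X×X, P and P̄ complex matrices indexed by Y×X, and c ∈ ℂ. Set D# = D + c·P̄ᵀP and assume D# is invertible. Set H = c·(D#)⁻¹P̄ᵀ and H̄ = c·((D#)⁻¹)ᵀPᵀ (matrices indexed by X×Y), and D̃ = c·I − c²·P(D#)⁻¹P̄ᵀ (indexed by Y×Y). For ψ̄, ψ : Y → R and ψ̄₀, ψ₀ : X → R, put ψ₀' = ψ₀ + Hψ and ψ̄₀' = ψ̄₀ + H̄ψ̄ (matrices acting by scalar-coefficient sums). Then c·Σ_{y∈Y} (ψ̄ − P̄ψ̄₀')_y (ψ − Pψ₀')_y + Σ_{x,x'∈X} D_{xx'} (ψ̄₀')_x (ψ₀')_{x'} = Σ_{y,y'∈Y}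 D̃_{yy'} ψ̄_y ψ_{y'} + Σ_{x,x'∈X} (D#)_{xx'} (ψ̄₀)_x (ψ₀)_{x'}. -/
section FQFDAux
variable {R : Type*} [Ring R] [Algebra ℂ R]
variable {A B C : Type*} [Fintype A] [Fintype B] [Fintype C]

lemma FQFD_sum_swap3 {M : Type*} [AddCommMonoid M] {α β γ : Type*} [Fintype α] [Fintype β]
    [Fintype γ] (f : α → β → γ → M) :
    ∑ a : α, ∑ b : β, ∑ c : γ, f a b c = ∑ c : γ, ∑ b : β, ∑ a : α, f a b c := by
  rw [Finset.sum_comm]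
  rw [show (∑ b : β, ∑ a : α, ∑ c : γ, f a b c) = ∑ b : β, ∑ c : γ, ∑ a : α, f a b c from
    Finset.sum_congr rfl fun _ _ => Finset.sum_comm]
  exact Finset.sum_comm

/-- bilinear pairing of two `R`-valued vectors with a matrix of complex coefficients -/
def QF (M : Matrix A B ℂ) (u : A → R) (v : B → R) : R :=
  ∑ a : A, ∑ b : B, M a b • (u a * v b)

/-- a complex matrix acting on an `R`-valued vector -/
def mvec (M : Matrix A B ℂ) (v : B → R) (a : A) : R := ∑ b : B, M a b • v b

lemma QF_mv_right (M : Matrix A B ℂ) (N : Matrix B C ℂ) (u : A → R) (w : C → R) :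
    QF M u (mvec N w) = QF (M * N) u w := by
  unfold QF mvec
  refine Finset.sum_congr rfl fun a _ => ?_
  simp only [Matrix.mul_apply, Finset.mul_sum, mul_smul_comm, Finset.smul_sum, smul_smul,
    Finset.sum_smul]
  exact Finset.sum_comm

lemma QF_mv_left (N : Matrix A B ℂ) (M : Matrix A C ℂ) (u : B → R) (w : C → R) :
    QF M (mvec N u) w = QF (N.transpose * M) u w := by
  unfold QF mvec
  simp only [Matrix.mul_apply, Matrix.transpose_apply, Finset.sum_mul, smul_mul_assoc,
    Finset.smul_sum, smul_smul, Finset.sum_smul]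
  rw [FQFD_sum_swap3 (fun a c b => (M a c * N a b) • (u b * w c))]
  refine Finset.sum_congr rfl fun b _ => Finset.sum_congr rfl fun c _ =>
    Finset.sum_congr rfl fun a _ => ?_
  rw [mul_comm (M a c) (N a b)]

lemma QF_add_right (M : Matrix A B ℂ) (u : A → R) (v v' : B → R) :
    QF M u (fun b => v b + v' b) = QF M u v + QF M u v' := by
  simp [QF, mul_add, smul_add, Finset.sum_add_distrib]

lemma QF_add_left (M : Matrix A B ℂ) (u u' : A → R) (v : B → R) :
    QF M (fun a => u a + u' a) v = QF M u v + QF M u' v := by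
  simp [QF, add_mul, smul_add, Finset.sum_add_distrib]

lemma QF_sub_matrix (M M' : Matrix A B ℂ) (u : A → R) (v : B → R) :
    QF (M - M') u v = QF M u v - QF M' u v := by
  simp [QF, sub_smul, Finset.sum_sub_distrib]

lemma QF_cI [DecidableEq A] (c : ℂ) (u v : A → R) :
    QF (c • (1 : Matrix A A ℂ)) u v = c • ∑ a : A, u a * v a := by
  simp [QF, Matrix.one_apply, ite_smul, Finset.smul_sum, smul_smul]

end FQFDAux

/-- exact diagonalization of the fermionic block-averaging quadratic form.
With `D# = D + c P̄ᵀP` invertible, `H = c (D#)⁻¹ P̄ᵀ`, `H̄ = c ((D#)⁻¹)ᵀ Pᵀ`,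
`D̃ = c I − c² P (D#)⁻¹ P̄ᵀ`, and translated fields `ψ₀' = ψ₀ + Hψ`, `ψ̄₀' = ψ̄₀ + H̄ψ̄`,
the quadratic form splits exactly. -/
theorem fermion_quadratic_form_diagonalization
    {R : Type*} [Ring R] [Algebra ℂ R]
    {X Y : Type*} [Fintype X] [Fintype Y] [DecidableEq X] [DecidableEq Y]
    (D : Matrix X X ℂ) (P Pb : Matrix Y X ℂ) (c : ℂ)
    (Dsharp : Matrix X X ℂ) (hDsharp : Dsharp = D + c • (Pb.transpose * P))
    (hinv : IsUnit Dsharp.det)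
    (H Hb : Matrix X Y ℂ)
    (hH : H = c • (Dsharp⁻¹ * Pb.transpose))
    (hHb : Hb = c • (Dsharp⁻¹.transpose * P.transpose))
    (Dt : Matrix Y Y ℂ)
    (hDt : Dt = c • (1 : Matrix Y Y ℂ) - c ^ 2 • (P * Dsharp⁻¹ * Pb.transpose))
    (ψb ψ : Y → R) (ψb₀ ψ₀ : X → R)
    (ψ₀' ψb₀' : X → R)
    (hψ₀' : ∀ x, ψ₀' x = ψ₀ x + ∑ y : Y, H x y • ψ y)
    (hψb₀' : ∀ x, ψb₀' x = ψb₀ x + ∑ y : Y, Hb x y • ψb y) :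
    c • (∑ y : Y, (ψb y - ∑ x : X, Pb y x • ψb₀' x) * (ψ y - ∑ x : X, P y x • ψ₀' x)) +
        ∑ x : X, ∑ x' : X, D x x' • (ψb₀' x * ψ₀' x') =
      (∑ y : Y, ∑ y' : Y, Dt y y' • (ψb y * ψ y')) +
        ∑ x : X, ∑ x' : X, Dsharp x x' • (ψb₀ x * ψ₀ x') := by
  have hv : ψ₀' = fun x => ψ₀ x + mvec H ψ x := funext fun x => hψ₀' x
  have hw : ψb₀' = fun x => ψb₀ x + mvec Hb ψb x := funext fun x => hψb₀' x
  subst hv hw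
  show c • (∑ y : Y, (ψb y - mvec Pb (fun x => ψb₀ x + mvec Hb ψb x) y)
        * (ψ y - mvec P (fun x => ψ₀ x + mvec H ψ x) y))
      + QF D (fun x => ψb₀ x + mvec Hb ψb x) (fun x => ψ₀ x + mvec H ψ x)
    = QF Dt ψb ψ + QF Dsharp ψb₀ ψ₀
  have hHbT : Hb.transpose = c • (P * Dsharp⁻¹) := by
    rw [hHb]; simp [Matrix.transpose_smul, Matrix.transpose_mul, Matrix.transpose_transpose]
  have hKD : Dsharp⁻¹ * Dsharp = 1 := Matrix.nonsing_inv_mul _ hinv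
  have hKDa : ∀ (M : Matrix X Y ℂ), Dsharp⁻¹ * (Dsharp * M) = M := fun M => by
    rw [← Matrix.mul_assoc, hKD, Matrix.one_mul]
  have hDKa : ∀ (M : Matrix X Y ℂ), Dsharp * (Dsharp⁻¹ * M) = M := fun M => by
    rw [← Matrix.mul_assoc, Matrix.mul_nonsing_inv _ hinv, Matrix.one_mul]
  simp only [sub_mul, mul_sub, Finset.sum_sub_distrib, smul_sub, ← QF_cI]
  rw [hDt, show D = Dsharp - c • (Pb.transpose * P) from by rw [hDsharp]; abel]
  simp only [QF_sub_matrix, QF_mv_right, QF_mv_left, QF_add_right, QF_add_left]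
  simp only [hH, hHbT, pow_two, Matrix.smul_mul, Matrix.mul_smul, smul_smul,
    Matrix.sub_mul, Matrix.mul_sub, smul_sub, Matrix.mul_one, Matrix.one_mul,
    Matrix.mul_assoc, hKDa, hDKa, hKD, QF_sub_matrix]
  abel
end

section
/- There exists κ₀ > 0 such that for every κ ≥ κ₀, the sum over all finite connected sets X ⊆ ℤ³ containing the origin of e^{−κ·|X|} is at most 1. -/
/-!
A connected set of `n` cells containing the origin is the set of cells visited by a walk of
`2 (n - 1)` king moves starting at the origin: grow the walk one cell at a time, inserting a
detour `w → z → w` to a new neighbour `z` of a visited cell `w`, as in a depth-first traversal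
of a spanning tree. A king move is one of `27` displacements, so there are at most
`27 ^ (2 (n - 1))` such sets, and the sum is at most `∑ₙ 729 ^ n e^{-κ (n + 1)}`, which is at
most `1` as soon as `730 e^{-κ} ≤ 1`.
-/

/-- Two points of `ℤ³` are adjacent if they are at `ℓ∞`-distance at most 1
(touching, possibly only at corners or edges). -/
def ZAdj (a b : Fin 3 → ℤ) : Prop := ∀ i, |a i - b i| ≤ 1

/-- A finite set `X ⊆ ℤ³` is connected if it is nonempty and any two of its points
are joined by a chain of points of `X` with consecutive points adjacent. -/
def ZConnected (X : Finset (Fin 3 → ℤ)) : Prop :=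
  X.Nonempty ∧ ∀ x ∈ X, ∀ y ∈ X,
    Relation.ReflTransGen (fun a b => a ∈ X ∧ b ∈ X ∧ ZAdj a b) x y

open Finset List Relation

open scoped ENNReal

theorem Relation.ReflTransGen.exists_rel_mem_notMem {α : Type*} {r : α → α → Prop} {s : Set α}
    {a b : α} (h : ReflTransGen r a b) (ha : a ∈ s) (hb : b ∉ s) :
    ∃ c ∈ s, ∃ d ∉ s, r c d := by
  induction h with
  | refl => exact absurd ha hb
  | @tail c d _ hcd ih =>
    by_cases hc : c ∈ s
    · exact ⟨c, hc, d, hb, hcd⟩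
    · exact ih hc

section Tour

variable {α : Type*} [DecidableEq α] {r : α → α → Prop}

theorem List.IsChain.exists_detour {L : List α} {w z : α} (h : IsChain r L) (hw : w ∈ L)
    (hwz : r w z) (hzw : r z w) :
    ∃ L', IsChain r L' ∧ L'.head? = L.head? ∧ L'.toFinset = insert z L.toFinset ∧
      L'.length = L.length + 2 := by
  obtain ⟨s, t, rfl⟩ := List.append_of_mem hw
  refine ⟨s ++ w :: z :: w :: t, ?_, by cases s <;> simp, ?_, by simp; omega⟩
  · rw [isChain_split] at h
    simpa [h.1, hwz, hzw] using h.2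
  · ext a
    simp only [List.mem_toFinset, List.mem_append, List.mem_cons, Finset.mem_insert]
    tauto

variable [Std.Symm r] {X : Finset α} {x : α}

theorem exists_isChain_toFinset_subset_of_lt_card (hx : x ∈ X)
    (hX : ∀ y ∈ X, ReflTransGen (fun a b => a ∈ X ∧ b ∈ X ∧ r a b) x y) :
    ∀ k < #X, ∃ L : List α, IsChain r L ∧ L.head? = some x ∧ L.toFinset ⊆ X ∧
      #L.toFinset = k + 1 ∧ L.length = 2 * k + 1
  | 0, _ => ⟨[x], by simp [hx]⟩
  | k + 1, hk => by
    obtain ⟨L, hL, hLx, hLX, hLcard, hLlen⟩ :=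
      exists_isChain_toFinset_subset_of_lt_card hx hX k (by omega)
    obtain ⟨y, hyX, hyL⟩ : ∃ y ∈ X, y ∉ L.toFinset :=
      Finset.exists_mem_notMem_of_card_lt_card (by omega)
    have hxL : x ∈ (L.toFinset : Set α) := by simpa using List.mem_of_mem_head? hLx
    -- the walk inside `X` from `x` to `y` leaves the visited cells along some edge `w → z`
    obtain ⟨w, hwL, z, hzL, hwX, hzX, hwz⟩ := (hX y hyX).exists_rel_mem_notMem hxL hyL
    obtain ⟨L', hL', hL'x, hL'set, hL'len⟩ :=
      hL.exists_detour (by simpa using hwL) hwz (symm_of r hwz)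
    refine ⟨L', hL', hL'x ▸ hLx, ?_, ?_, by omega⟩
    · rw [hL'set]
      exact Finset.insert_subset hzX hLX
    · rw [hL'set, Finset.card_insert_of_notMem (by simpa using hzL), hLcard]

theorem exists_isChain_toFinset_eq (hx : x ∈ X)
    (hX : ∀ y ∈ X, ReflTransGen (fun a b => a ∈ X ∧ b ∈ X ∧ r a b) x y) :
    ∃ L : List α, IsChain r L ∧ L.head? = some x ∧ L.toFinset = X ∧
      L.length = 2 * #X - 1 := by
  have hX0 : 0 < #X := Finset.card_pos.2 ⟨x, hx⟩
  obtain ⟨L, hL, hLx, hLX, hLcard, hLlen⟩ :=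
    exists_isChain_toFinset_subset_of_lt_card hx hX (#X - 1) (by omega)
  exact ⟨L, hL, hLx, Finset.eq_of_subset_of_card_le hLX (by omega), by omega⟩

end Tour

theorem List.exists_scanl_eq_of_isChain {α δ : Type*} {r : α → α → Prop} {f : α → δ → α}
    (hf : ∀ a b, r a b → ∃ d, f a d = b) :
    ∀ {L : List α} {x : α}, IsChain r L → L.head? = some x → ∃ s : List δ, s.scanl f x = L
  | [], _, _, hx => by simp at hx
  | [a], x, _, hx => ⟨[], by simpa using hx.symm⟩
  | a :: b :: L, x, h, hx => by
    obtain rfl : a = x := by simpa using hx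
    rw [isChain_cons_cons] at h
    obtain ⟨d, rfl⟩ := hf _ _ h.1
    obtain ⟨s, hs⟩ := exists_scanl_eq_of_isChain hf h.2 rfl
    exact ⟨d :: s, by simp [hs]⟩

section Lattice

variable {ι : Type*}

def unitStep (d : ι → Fin 3) : ι → ℤ := fun i => (d i : ℤ) - 1

theorem exists_add_unitStep_eq {a b : ι → ℤ} (h : ∀ i, |a i - b i| ≤ 1) :
    ∃ d : ι → Fin 3, a + unitStep d = b := by
  refine ⟨fun i => ⟨(b i - a i + 1).toNat, by have := abs_le.1 (h i); omega⟩, ?_⟩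
  funext i
  have := abs_le.1 (h i)
  simp only [unitStep, Pi.add_apply]
  omega

variable [Fintype ι] [DecidableEq ι]

def cellsOfSteps (s : List (ι → Fin 3)) : Finset (ι → ℤ) :=
  (s.scanl (fun p d => p + unitStep d) 0).toFinset

end Lattice

instance : Std.Symm ZAdj := ⟨fun a b h i => abs_sub_comm (a i) (b i) ▸ h i⟩

theorem ZConnected.exists_cellsOfSteps_eq {X : Finset (Fin 3 → ℤ)} (hX : ZConnected X)
    (h0 : (0 : Fin 3 → ℤ) ∈ X) :
    ∃ s : List.Vector (Fin 3 → Fin 3) (2 * (#X - 1)), cellsOfSteps s.toList = X := by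
  obtain ⟨L, hL, hL0, hLX, hLlen⟩ := exists_isChain_toFinset_eq h0 (hX.2 0 h0)
  obtain ⟨s, rfl⟩ := List.exists_scanl_eq_of_isChain (fun _ _ => exists_add_unitStep_eq) hL hL0
  have hs : s.length = 2 * (#X - 1) := by
    have : 0 < #X := hX.1.card_pos
    simp only [List.length_scanl] at hLlen
    omega
  exact ⟨⟨s, hs⟩, hLX⟩

theorem tsum_pow_card_connected_le (q : ℝ≥0∞) :
    ∑' X : {X : Finset (Fin 3 → ℤ) // ZConnected X ∧ (0 : Fin 3 → ℤ) ∈ X}, q ^ #X.1 ≤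
      ∑' n : ℕ, 729 ^ n * q ^ (n + 1) := by
  choose steps hsteps using fun X : {X // ZConnected X ∧ (0 : Fin 3 → ℤ) ∈ X} =>
    X.2.1.exists_cellsOfSteps_eq X.2.2
  let code X : Σ n : ℕ, List.Vector (Fin 3 → Fin 3) (2 * n) := ⟨#X.1 - 1, steps X⟩
  have code_injective : Function.Injective code := fun X Y h => Subtype.ext <| by
    rw [← hsteps X, ← hsteps Y]
    exact congrArg (fun p => cellsOfSteps p.2.toList) h
  calc ∑' X : {X // ZConnected X ∧ (0 : Fin 3 → ℤ) ∈ X}, q ^ #X.1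
        = ∑' X : {X // ZConnected X ∧ (0 : Fin 3 → ℤ) ∈ X}, q ^ ((code X).1 + 1) := by
        refine tsum_congr fun X => ?_
        rw [Nat.sub_add_cancel X.2.1.1.card_pos]
    _ ≤ ∑' p : Σ n : ℕ, List.Vector (Fin 3 → Fin 3) (2 * n), q ^ (p.1 + 1) :=
        ENNReal.tsum_comp_le_tsum_of_injective code_injective _
    _ = ∑' n : ℕ, 729 ^ n * q ^ (n + 1) := by
        rw [ENNReal.tsum_sigma']
        refine tsum_congr fun n => ?_
        simp [tsum_fintype, card_vector, pow_mul]

theorem ENNReal.tsum_pow_mul_pow_succ_le_one {c q : ℝ≥0∞} (h : (c + 1) * q ≤ 1) :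
    ∑' n : ℕ, c ^ n * q ^ (n + 1) ≤ 1 := by
  calc ∑' n : ℕ, c ^ n * q ^ (n + 1) = q * ∑' n : ℕ, (c * q) ^ n := by
        rw [← ENNReal.tsum_mul_left]
        refine tsum_congr fun n => ?_
        ring
    _ = q / (1 - c * q) := by rw [ENNReal.tsum_geometric, div_eq_mul_inv]
    _ ≤ 1 := by
        have h' : q + c * q ≤ 1 := by rwa [add_comm, add_mul, one_mul] at h
        refine ENNReal.div_le_of_le_mul ?_
        rw [one_mul]
        exact ENNReal.le_sub_of_add_le_right (ne_top_of_le_ne_top ENNReal.one_ne_top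
          (le_add_self.trans h')) h'

/-- for `κ` large enough, the sum over all finite connected sets
`X ⊆ ℤ³` containing the origin of `e^{−κ|X|}` is at most `1`. -/
theorem sum_over_connected_sets_le_one :
    ∃ κ₀ : ℝ, 0 < κ₀ ∧ ∀ κ : ℝ, κ₀ ≤ κ →
      (∑' X : {X : Finset (Fin 3 → ℤ) // ZConnected X ∧ (0 : Fin 3 → ℤ) ∈ X},
        ENNReal.ofReal (Real.exp (-κ * (X.1.card : ℝ)))) ≤ 1 := by
  refine ⟨Real.log 730, Real.log_pos (by norm_num), fun κ hκ => ?_⟩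
  have hexp : 730 * Real.exp (-κ) ≤ 1 := by
    calc 730 * Real.exp (-κ) ≤ 730 * Real.exp (-Real.log 730) := by gcongr
      _ = 1 := by rw [Real.exp_neg, Real.exp_log (by norm_num)]; norm_num
  have hq : (729 + 1) * ENNReal.ofReal (Real.exp (-κ)) ≤ 1 := by
    rw [show (729 + 1 : ℝ≥0∞) = ENNReal.ofReal 730 by norm_num,
      ← ENNReal.ofReal_mul (by norm_num), ← ENNReal.ofReal_one]
    exact ENNReal.ofReal_le_ofReal hexp
  calc _ = ∑' X : {X : Finset (Fin 3 → ℤ) // ZConnected X ∧ (0 : Fin 3 → ℤ) ∈ X},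
        ENNReal.ofReal (Real.exp (-κ)) ^ #X.1 := by
        simp_rw [mul_comm (-κ), Real.exp_nat_mul, ENNReal.ofReal_pow (Real.exp_nonneg _)]
    _ ≤ ∑' n : ℕ, 729 ^ n * ENNReal.ofReal (Real.exp (-κ)) ^ (n + 1) :=
        tsum_pow_card_connected_le _
    _ ≤ 1 := ENNReal.tsum_pow_mul_pow_succ_le_one hq
end

section
/- There exists κ₀ > 0 such that for every κ ≥ κ₀, every α ≥ 0, and every finite set Ω ⊆ ℤ³, the sum over all finite collections 𝒞 of pairwise distinct connected subsets of Ω (including the empty collection, whose product is 1) of Π_{X∈𝒞} α·e^{−κ·|X|} is at most exp(α·|Ω|). -/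
/-!
Expanding the product, the sum over collections is `∏_X (1 + α e^{-κ|X|}) ≤ exp (α ∑_X e^{-κ|X|})`,
the product running over the connected `X ⊆ Ω`; so it suffices that the connected sets containing a
fixed point contribute at most `1` to `∑_X e^{-κ|X|}`. A connected set of `n` points containing `v`
is the vertex set of a closed walk from `v` through `2n - 1` points (a depth-first tour of a
spanning tree), and the walk is recovered from `v` and its `2n - 2` steps, each one of the `27`
vectors of `{-1, 0, 1}³`. Hence there are at most `27^(2n-2)` such sets, and their contributions
form a geometric series of sum at most `1` once `2 · 27² · e^{-κ} ≤ 1`.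
-/

open Finset Relation

section

variable {α : Type*}

def InducedRel (r : α → α → Prop) (X : Finset α) (a b : α) : Prop := a ∈ X ∧ b ∈ X ∧ r a b

def RelConnected (r : α → α → Prop) (X : Finset α) : Prop :=
  X.Nonempty ∧ ∀ x ∈ X, ∀ y ∈ X, ReflTransGen (InducedRel r X) x y

theorem Relation.ReflTransGen.exists_ne_rel {r : α → α → Prop} {x y : α}
    (h : ReflTransGen r x y) (hne : y ≠ x) : ∃ z ≠ x, r x z := by
  induction h with
  | refl => exact absurd rfl hne
  | @tail b c _ hbc ih =>
    by_cases hb : b = x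
    · exact ⟨c, hne, hb ▸ hbc⟩
    · exact ih hb

section Walk

variable {r : α → α → Prop} [Std.Symm r]

instance (X : Finset α) : Std.Symm (InducedRel r X) := ⟨fun _ _ h => ⟨h.2.1, h.1, symm_of r h.2.2⟩⟩

theorem relConnected_filter_reflTransGen {Y : Finset α} {y : α} (hy : y ∈ Y)
    [DecidablePred (ReflTransGen (InducedRel r Y) y)] :
    RelConnected r {z ∈ Y | ReflTransGen (InducedRel r Y) y z} := by
  set C := {z ∈ Y | ReflTransGen (InducedRel r Y) y z}
  have reach : ∀ z, ReflTransGen (InducedRel r Y) y z → ReflTransGen (InducedRel r C) y z := by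
    intro z hz
    induction hz with
    | refl => exact .refl
    | @tail b c hyb hbc ih =>
      exact ih.tail ⟨mem_filter.2 ⟨hbc.1, hyb⟩, mem_filter.2 ⟨hbc.2.1, hyb.tail hbc⟩, hbc.2.2⟩
  refine ⟨⟨y, mem_filter.2 ⟨hy, .refl⟩⟩, fun a ha b hb => ?_⟩
  exact (symm_of _ (reach a (mem_filter.1 ha).2)).trans (reach b (mem_filter.1 hb).2)

theorem List.isChain_append_append_singleton {l₁ l₂ : List α} {x y : α}
    (h₁ : l₁.IsChain r) (hl₁ : l₁.getLast? = some x) (h₂ : l₂.IsChain r)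
    (hl₂ : l₂.head? = some y) (hl₂' : l₂.getLast? = some y) (hxy : r x y) :
    (l₁ ++ (l₂ ++ [x])).IsChain r := by
  have hne : l₂ ≠ [] := by rintro rfl; simp at hl₂
  refine isChain_append.2 ⟨h₁, isChain_append.2 ⟨h₂, isChain_singleton x, ?_⟩, ?_⟩
  · simp [hl₂', symm_of r hxy]
  · simp [hl₁, head?_append_of_ne_nil _ hne, hl₂, hxy]

variable [DecidableEq α]

theorem RelConnected.sdiff {X C : Finset α} (hX : RelConnected r X) {x : α} (hx : x ∈ X)
    (hxC : x ∉ C) (hsep : ∀ a ∈ X, ∀ c ∈ C, r a c → a = x ∨ a ∈ C) :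
    RelConnected r (X \ C) := by
  have hxX' : x ∈ X \ C := mem_sdiff.2 ⟨hx, hxC⟩
  have reach : ∀ a ∈ X \ C, ReflTransGen (InducedRel r (X \ C)) a x := by
    intro a ha
    induction hX.2 a (mem_sdiff.1 ha).1 x hx using ReflTransGen.head_induction_on with
    | refl => exact .refl
    | @head a c hac _ ih =>
      by_cases hc : c ∈ C
      · rcases hsep a hac.1 c hc hac.2.2 with rfl | haC
        · exact .refl
        · exact absurd haC (mem_sdiff.1 ha).2
      · have hc' : c ∈ X \ C := mem_sdiff.2 ⟨hac.2.1, hc⟩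
        exact (ih hc').head ⟨ha, hc', hac.2.2⟩
  exact ⟨⟨x, hxX'⟩, fun a ha b hb => (reach a ha).trans (symm_of _ (reach b hb))⟩

theorem RelConnected.exists_split {X : Finset α} (hX : RelConnected r X) {x : α} (hx : x ∈ X)
    (hXx : X ≠ {x}) : ∃ y C, r x y ∧ y ∈ C ∧ C ⊆ X ∧ x ∉ C ∧ RelConnected r C ∧
      RelConnected r (X \ C) := by
  classical
  obtain ⟨y, hyX, hyx⟩ : ∃ y ∈ X, y ≠ x := by
    by_contra! h
    exact hXx (eq_singleton_iff_unique_mem.2 ⟨hx, h⟩)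
  obtain ⟨y, hyx, -, hyX, hxy⟩ := (hX.2 x hx y hyX).exists_ne_rel hyx
  set Y := X.erase x
  have hyY : y ∈ Y := mem_erase.2 ⟨hyx, hyX⟩
  set C := {z ∈ Y | ReflTransGen (InducedRel r Y) y z}
  refine ⟨y, C, hxy, mem_filter.2 ⟨hyY, .refl⟩, (filter_subset _ _).trans (erase_subset _ _),
    fun h => (mem_erase.1 (mem_filter.1 h).1).1 rfl, relConnected_filter_reflTransGen hyY,
    hX.sdiff hx (fun h => (mem_erase.1 (mem_filter.1 h).1).1 rfl) fun a ha c hc hac =>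
      or_iff_not_imp_left.2 fun hax => ?_⟩
  have haY : a ∈ Y := mem_erase.2 ⟨hax, ha⟩
  exact mem_filter.2 ⟨haY, (mem_filter.1 hc).2.tail ⟨(mem_filter.1 hc).1, haY, symm_of r hac⟩⟩

theorem RelConnected.exists_closed_walk {X : Finset α} (hX : RelConnected r X) {x : α}
    (hx : x ∈ X) : ∃ l : List α, l.head? = some x ∧ l.getLast? = some x ∧ l.IsChain r ∧
      l.toFinset = X ∧ l.length = 2 * #X - 1 := by
  induction hn : #X using Nat.strong_induction_on generalizing X x with
  | _ n ih =>
  by_cases hXx : X = {x}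
  · subst hXx
    exact ⟨[x], rfl, rfl, List.isChain_singleton x, by simp, by simp [← hn]⟩
  obtain ⟨y, C, hxy, hyC, hCX, hxC, hC, hX'⟩ := hX.exists_split hx hXx
  have hxX' : x ∈ X \ C := mem_sdiff.2 ⟨hx, hxC⟩
  have hcard : #(X \ C) + #C = n := hn ▸ card_sdiff_add_card_eq_card hCX
  have hC₀ : 0 < #C := card_pos.2 ⟨y, hyC⟩
  have hX'₀ : 0 < #(X \ C) := card_pos.2 ⟨x, hxX'⟩
  obtain ⟨l₁, h₁, h₁', c₁, s₁, n₁⟩ := ih _ (by omega) hX' hxX' rfl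
  obtain ⟨l₂, h₂, h₂', c₂, s₂, n₂⟩ := ih _ (by omega) hC hyC rfl
  refine ⟨l₁ ++ (l₂ ++ [x]), by simp [List.head?_append, h₁], by simp,
    List.isChain_append_append_singleton c₁ h₁' c₂ h₂ h₂' hxy, ?_, ?_⟩
  · rw [List.toFinset_append, List.toFinset_append, s₁, s₂, List.toFinset_cons,
      List.toFinset_nil, insert_empty_eq, ← union_assoc, sdiff_union_of_subset hCX,
      union_singleton, insert_eq_of_mem hx]
  · simp only [List.length_append, List.length_singleton]
    omega

end Walk

namespace List

variable [AddGroup α]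

def diffs : List α → List α
  | a :: b :: l => (b - a) :: diffs (b :: l)
  | _ => []

@[simp]
theorem length_diffs : ∀ l : List α, l.diffs.length = l.length - 1
  | [] | [_] => rfl
  | _ :: b :: l => by simp [diffs, length_diffs (b :: l)]

theorem IsChain.diffs_mem {r : α → α → Prop} {D : Finset α} (hD : ∀ a b, r a b → b - a ∈ D) :
    ∀ {l : List α}, l.IsChain r → ∀ d ∈ l.diffs, d ∈ D
  | [], _ | [_], _ => by simp [diffs]
  | a :: b :: l, h => by
    rw [isChain_cons_cons] at h
    simp only [diffs, mem_cons, forall_eq_or_imp]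
    exact ⟨hD a b h.1, h.2.diffs_mem hD⟩

theorem eq_of_head?_eq_of_diffs_eq : ∀ {l₁ l₂ : List α}, l₁.head? = l₂.head? →
    l₁.diffs = l₂.diffs → l₁ = l₂
  | [], [], _, _ => rfl
  | [a], [b], h, _ => by simpa using h
  | a :: b :: l₁, a' :: b' :: l₂, h, hd => by
    obtain rfl : a = a' := by simpa using h
    simp only [diffs, cons.injEq, sub_left_inj] at hd
    obtain rfl := hd.1
    exact congrArg (a :: ·) (eq_of_head?_eq_of_diffs_eq (l₁ := b :: l₁) rfl hd.2)
  | [], _ :: _, h, _ | _ :: _, [], h, _ => by simp at h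
  | [_], _ :: _ :: _, _, h | _ :: _ :: _, [_], _, h => by simp [diffs] at h

end List

theorem card_le_card_pow_of_relConnected [AddGroup α] [DecidableEq α] {r : α → α → Prop}
    [Std.Symm r] {D : Finset α} (hD : ∀ a b, r a b → b - a ∈ D) {T : Finset (Finset α)} {v : α}
    {n : ℕ} (hT : ∀ X ∈ T, RelConnected r X ∧ v ∈ X ∧ #X = n) : #T ≤ #D ^ (2 * n - 2) := by
  choose! walk hwalk using fun X (hX : X ∈ T) => (hT X hX).1.exists_closed_walk (hT X hX).2.1
  have hlen : ∀ X ∈ T, (walk X).diffs.length = 2 * n - 2 := fun X hX => by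
    simp [(hwalk X hX).2.2.2.2, (hT X hX).2.2]; omega
  let code : Finset α → Fin (2 * n - 2) → α := fun X j => (walk X).diffs.getD j 0
  calc #T ≤ #(Fintype.piFinset fun _ : Fin (2 * n - 2) => D) := by
        refine card_le_card_of_injOn code (fun X hX => ?_) (fun X₁ h₁ X₂ h₂ he => ?_)
        · refine Fintype.mem_piFinset.2 fun j => ?_
          have hj : j < (walk X).diffs.length := (hlen X hX).symm ▸ j.2
          simp only [code, List.getD_eq_getElem _ _ hj]
          exact (hwalk X hX).2.2.1.diffs_mem hD _ (List.getElem_mem _)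
        · obtain ⟨hh₁, -, -, hs₁, -⟩ := hwalk X₁ h₁
          obtain ⟨hh₂, -, -, hs₂, -⟩ := hwalk X₂ h₂
          rw [← hs₁, ← hs₂, List.eq_of_head?_eq_of_diffs_eq (hh₁.trans hh₂.symm)
            (List.ext_getElem ((hlen X₁ h₁).trans (hlen X₂ h₂).symm) fun j hj₁ hj₂ => ?_)]
          have : (walk X₁).diffs.getD j 0 = (walk X₂).diffs.getD j 0 :=
            congrFun he ⟨j, hlen X₁ h₁ ▸ hj₁⟩
          rwa [List.getD_eq_getElem _ _ hj₁, List.getD_eq_getElem _ _ hj₂] at this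
    _ = #D ^ (2 * n - 2) := by simp

theorem sum_pow_card_le_one_of_relConnected [AddGroup α] [DecidableEq α] {r : α → α → Prop}
    [Std.Symm r] {D : Finset α} (hD : ∀ a b, r a b → b - a ∈ D) (hDne : D.Nonempty) {t : ℝ}
    (ht : 0 ≤ t) (htD : 2 * #D ^ 2 * t ≤ 1) {T : Finset (Finset α)} {v : α}
    (hT : ∀ X ∈ T, RelConnected r X ∧ v ∈ X) : ∑ X ∈ T, t ^ #X ≤ 1 := by
  have hq : #D ^ 2 * t ≤ 1 / 2 := by linarith
  have ht₂ : t ≤ 1 / 2 := by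
    have : (1 : ℝ) ≤ #D ^ 2 := one_le_pow₀ (by exact_mod_cast hDne.card_pos)
    nlinarith
  have h₀ : ∑ X ∈ T with #X = 0, t ^ #X = 0 := sum_eq_zero fun X hX =>
    absurd (mem_filter.1 hX).2 (hT X (mem_filter.1 hX).1).1.1.card_pos.ne'
  have hsucc (i : ℕ) : ∑ X ∈ T with #X = i + 1, t ^ #X ≤ t * (1 / 2) ^ i := by
    have hcard : #{X ∈ T | #X = i + 1} ≤ #D ^ (2 * i) := by
      have := card_le_card_pow_of_relConnected hD (T := {X ∈ T | #X = i + 1}) (n := i + 1)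
        fun X hX => by
          obtain ⟨hXT, hXn⟩ := mem_filter.1 hX
          exact ⟨(hT X hXT).1, (hT X hXT).2, hXn⟩
      rwa [show 2 * (i + 1) - 2 = 2 * i by omega] at this
    calc ∑ X ∈ T with #X = i + 1, t ^ #X = #{X ∈ T | #X = i + 1} * t ^ (i + 1) := by
          rw [sum_congr rfl fun X hX => by rw [(mem_filter.1 hX).2], sum_const, nsmul_eq_mul]
      _ ≤ #D ^ (2 * i) * t ^ (i + 1) := by gcongr; exact_mod_cast hcard
      _ = t * (#D ^ 2 * t) ^ i := by ring
      _ ≤ t * (1 / 2) ^ i := by gcongr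
  set N := T.sup card
  rw [← sum_fiberwise_of_maps_to (g := card) (t := range (N + 1))
    fun X hX => mem_range.2 (Nat.lt_succ_of_le (le_sup hX)), sum_range_succ', h₀, add_zero]
  calc ∑ i ∈ range N, ∑ X ∈ T with #X = i + 1, t ^ #X ≤ ∑ i ∈ range N, t * (1 / 2) ^ i :=
        sum_le_sum fun i _ => hsucc i
    _ = t * ∑ i ∈ range N, (1 / 2 : ℝ) ^ i := (mul_sum ..).symm
    _ ≤ 1 / 2 * 2 := mul_le_mul ht₂ (sum_geometric_two_le N) (by positivity) (by norm_num)
    _ = 1 := by norm_num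

theorem sum_pow_card_le_card_of_relConnected [AddGroup α] [DecidableEq α] {r : α → α → Prop}
    [Std.Symm r] {D : Finset α} (hD : ∀ a b, r a b → b - a ∈ D) (hDne : D.Nonempty) {t : ℝ}
    (ht : 0 ≤ t) (htD : 2 * #D ^ 2 * t ≤ 1) {Ω : Finset α} {T : Finset (Finset α)}
    (hT : ∀ X ∈ T, X ⊆ Ω ∧ RelConnected r X) : ∑ X ∈ T, t ^ #X ≤ #Ω := by
  calc ∑ X ∈ T, t ^ #X ≤ ∑ X ∈ T, ∑ _v ∈ X, t ^ #X := sum_le_sum fun X hX => by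
        rw [sum_const, nsmul_eq_mul]
        exact le_mul_of_one_le_left (by positivity) (by exact_mod_cast (hT X hX).2.1.card_pos)
    _ = ∑ v ∈ Ω, ∑ X ∈ T with v ∈ X, t ^ #X := sum_comm' fun X v => by
        simp only [mem_filter]
        exact ⟨fun h => ⟨h, (hT X h.1).1 h.2⟩, And.left⟩
    _ ≤ ∑ _v ∈ Ω, 1 := sum_le_sum fun v _ => sum_pow_card_le_one_of_relConnected hD hDne ht htD
        fun X hX => ⟨(hT X (mem_filter.1 hX).1).2, (mem_filter.1 hX).2⟩
    _ = #Ω := by simp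

theorem tsum_prod_ofReal_le_exp_sum {ι : Type*} {P : ι → Prop} (S : Finset ι)
    (hS : ∀ i, i ∈ S ↔ P i) {w : ι → ℝ} (hw : ∀ i, 0 ≤ w i) :
    ∑' 𝒞 : {𝒞 : Finset ι // ∀ i ∈ 𝒞, P i}, ∏ i ∈ 𝒞.1, ENNReal.ofReal (w i) ≤
      ENNReal.ofReal (Real.exp (∑ i ∈ S, w i)) := by
  have hpowerset (𝒞 : Finset ι) : (∀ i ∈ 𝒞, P i) ↔ 𝒞 ∈ S.powerset := by
    simp [subset_iff, hS]
  calc ∑' 𝒞 : {𝒞 : Finset ι // ∀ i ∈ 𝒞, P i}, ∏ i ∈ 𝒞.1, ENNReal.ofReal (w i)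
      = ∑ 𝒞 ∈ S.powerset, ∏ i ∈ 𝒞, ENNReal.ofReal (w i) :=
        ((Equiv.subtypeEquivRight hpowerset).tsum_eq fun 𝒞 : S.powerset =>
          ∏ i ∈ 𝒞.1, ENNReal.ofReal (w i)).trans
          (Finset.tsum_subtype S.powerset fun 𝒞 => ∏ i ∈ 𝒞, ENNReal.ofReal (w i))
    _ = ENNReal.ofReal (∏ i ∈ S, (1 + w i)) := by
        rw [ENNReal.ofReal_prod_of_nonneg fun i _ => add_nonneg zero_le_one (hw i)]
        simp [ENNReal.ofReal_add, hw, prod_one_add]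
    _ ≤ ENNReal.ofReal (Real.exp (∑ i ∈ S, w i)) :=
        ENNReal.ofReal_le_ofReal (Real.prod_one_add_le_exp_sum S hw)

end

instance inst_s11 : Std.Symm ZAdj := ⟨fun _ _ h i => abs_sub_comm (α := ℤ) _ _ ▸ h i⟩

theorem ZAdj.sub_mem_cube {a b : Fin 3 → ℤ} (h : ZAdj a b) :
    b - a ∈ Fintype.piFinset fun _ : Fin 3 => Icc (-1 : ℤ) 1 :=
  Fintype.mem_piFinset.2 fun i => by
    have := abs_le.1 (h i)
    simp only [Pi.sub_apply, mem_Icc]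
    omega

/-- for `κ` large enough, for every `α ≥ 0` and every finite `Ω ⊆ ℤ³`,
the sum over all finite collections of pairwise distinct connected subsets of `Ω`
of `Π_{X ∈ 𝒞} α e^{−κ|X|}` is at most `exp(α |Ω|)`. -/
theorem sum_over_collections_of_connected_sets :
    ∃ κ₀ : ℝ, 0 < κ₀ ∧ ∀ κ : ℝ, κ₀ ≤ κ → ∀ α : ℝ, 0 ≤ α →
      ∀ Ω : Finset (Fin 3 → ℤ),
      (∑' 𝒞 : {𝒞 : Finset (Finset (Fin 3 → ℤ)) // ∀ X ∈ 𝒞, X ⊆ Ω ∧ ZConnected X},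
        ∏ X ∈ 𝒞.1, ENNReal.ofReal (α * Real.exp (-κ * (X.card : ℝ)))) ≤
      ENNReal.ofReal (Real.exp (α * (Ω.card : ℝ))) := by
  classical
  set cube := Fintype.piFinset fun _ : Fin 3 => Icc (-1 : ℤ) 1
  have hcube : #cube = 27 := by simp [cube]
  refine ⟨Real.log (2 * 27 ^ 2), Real.log_pos (by norm_num), fun κ hκ α hα Ω => ?_⟩
  have hsmall : 2 * #cube ^ 2 * Real.exp (-κ) ≤ 1 := by
    rw [Real.exp_neg, mul_inv_le_iff₀ (Real.exp_pos κ), one_mul, hcube]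
    exact_mod_cast (Real.log_le_iff_le_exp (by norm_num)).1 hκ
  refine (tsum_prod_ofReal_le_exp_sum (Ω.powerset.filter ZConnected) (by simp)
    fun X => by positivity).trans (ENNReal.ofReal_le_ofReal (Real.exp_le_exp.2 ?_))
  simp_rw [← mul_sum, mul_comm (-κ), Real.exp_nat_mul]
  gcongr
  exact sum_pow_card_le_card_of_relConnected (fun _ _ h => h.sub_mem_cube) ⟨0, by simp [cube]⟩
    (Real.exp_pos _).le hsmall fun X hX => ⟨mem_powerset.1 (mem_filter.1 hX).1, (mem_filter.1 hX).2⟩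
end

section
/- There is a universal constant c₀ > 0 with the following property. Let L be a positive integer, B = {0,1,…,L−1}³ ⊆ ℤ³, and a > 0. For every f : B → ℝ, writing E(f) = Σ_{μ=1}^{3} Σ_{x : x, x+e_μ ∈ B} (f(x+e_μ) − f(x))² for the Neumann Dirichlet form and m(f) = L⁻³ Σ_{x∈B} f(x) for the mean, one has E(f) + a·L·m(f)² ≥ min(c₀, a) · L⁻² · Σ_{x∈B} f(x)². -/
/-- The cube `{0,1,…,L−1}³ ⊆ ℤ³`. -/
def cubeBox (L : ℕ) : Finset (Fin 3 → ℤ) :=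
  Finset.image (fun t : Fin 3 → Fin L => fun i => ((t i : ℕ) : ℤ)) Finset.univ

/-- The coordinate unit vector `e_μ` of `ℤ³`. -/
def unitVec (μ : Fin 3) : Fin 3 → ℤ := fun i => if i = μ then 1 else 0

/-!
Discrete Poincaré inequality on the cube `B = {0,…,L-1}³`. Expanding the square,
`∑_{x,y ∈ B} (f x - f y)² = 2 L³ ∑ f² - 2 (∑ f)²`. Joining `x` to `y` by three axis-parallel
segments, each squared increment is at most `L` times the energy of its line (Cauchy–Schwarz);
summing over `x, y`, every line is counted `L⁴` times, so `∑_{x,y} (f x - f y)² ≤ 3 L⁵ E(f)`.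
Hence `∑ f² ≤ (3/2) L² E(f) + L⁻³ (∑ f)²`, which is the claim with `c₀ = 2/3`.
-/

open Finset

lemma sum_sum_sub_sq {ι : Type*} (A : Finset ι) (F : ι → ℝ) :
    ∑ s ∈ A, ∑ t ∈ A, (F s - F t) ^ 2 = 2 * #A * ∑ s ∈ A, F s ^ 2 - 2 * (∑ s ∈ A, F s) ^ 2 := by
  simp only [sub_sq, sum_add_distrib, sum_sub_distrib, sum_const, nsmul_eq_mul, ← mul_sum,
    ← sum_mul, mul_assoc]
  ring

def lineEnergy (L : ℕ) (h : ℕ → ℝ) : ℝ := ∑ k ∈ range (L - 1), (h (k + 1) - h k) ^ 2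

lemma sq_sub_le_mul_lineEnergy {L : ℕ} (h : ℕ → ℝ) {a b : ℕ} (ha : a < L) (hb : b < L) :
    (h a - h b) ^ 2 ≤ L * lineEnergy L h := by
  wlog hab : a ≤ b generalizing a b
  · rw [← neg_sub, neg_sq]; exact this hb ha (by omega)
  calc (h a - h b) ^ 2 = (∑ k ∈ Ico a b, (h (k + 1) - h k)) ^ 2 := by
        rw [sum_Ico_sub h hab]; ring
    _ ≤ #(Ico a b) * ∑ k ∈ Ico a b, (h (k + 1) - h k) ^ 2 := sq_sum_le_card_mul_sum_sq
    _ ≤ L * lineEnergy L h := by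
        gcongr
        · rw [Nat.card_Ico]; exact_mod_cast (by omega : b - a ≤ L)
        · refine sum_le_sum_of_subset_of_nonneg (fun k hk => ?_) fun _ _ _ => sq_nonneg _
          simp only [mem_Ico, mem_range] at hk ⊢; omega

def cubeEnergy (L : ℕ) (g : ℕ → ℕ → ℕ → ℝ) : ℝ :=
  ∑ b ∈ range L, ∑ c ∈ range L, lineEnergy L (g · b c) +
    ∑ a ∈ range L, ∑ c ∈ range L, lineEnergy L (g a · c) +
    ∑ a ∈ range L, ∑ b ∈ range L, lineEnergy L (g a b ·)

lemma cubeEnergy_nonneg (L : ℕ) (g : ℕ → ℕ → ℕ → ℝ) : 0 ≤ cubeEnergy L g := by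
  unfold cubeEnergy lineEnergy; positivity

lemma sq_sub_le_three_mul_sum_sq (x y z w : ℝ) :
    (x - w) ^ 2 ≤ 3 * ((x - y) ^ 2 + (y - z) ^ 2 + (z - w) ^ 2) := by
  nlinarith [sq_nonneg (x - 2 * y + z), sq_nonneg (y - 2 * z + w), sq_nonneg (x - y - z + w)]

lemma sum_sub_sq_le_cubeEnergy (L : ℕ) (g : ℕ → ℕ → ℕ → ℝ) :
    ∑ a ∈ range L, ∑ b ∈ range L, ∑ c ∈ range L, ∑ a' ∈ range L, ∑ b' ∈ range L,
      ∑ c' ∈ range L, (g a b c - g a' b' c') ^ 2 ≤ 3 * L ^ 5 * cubeEnergy L g := by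
  calc _ ≤ ∑ a ∈ range L, ∑ b ∈ range L, ∑ c ∈ range L, ∑ a' ∈ range L, ∑ b' ∈ range L,
        ∑ c' ∈ range L, 3 * L * (lineEnergy L (g · b c) + lineEnergy L (g a' · c) +
          lineEnergy L (g a' b' ·)) := by
        gcongr with a ha b hb c hc a' ha' b' hb' c' hc'
        simp only [mem_range] at *
        calc (g a b c - g a' b' c') ^ 2
            ≤ 3 * ((g a b c - g a' b c) ^ 2 + (g a' b c - g a' b' c) ^ 2 +
                (g a' b' c - g a' b' c') ^ 2) := sq_sub_le_three_mul_sum_sq ..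
          _ ≤ _ := by
            have h₁ := sq_sub_le_mul_lineEnergy (g · b c) ha ha'
            have h₂ := sq_sub_le_mul_lineEnergy (g a' · c) hb hb'
            have h₃ := sq_sub_le_mul_lineEnergy (g a' b' ·) hc hc'
            linarith
    _ = 3 * L ^ 5 * cubeEnergy L g := by
        simp only [cubeEnergy, mul_add, sum_add_distrib, sum_const, card_range, nsmul_eq_mul,
          ← mul_sum]
        rw [sum_comm (s := range L) (t := range L) (f := fun c a => lineEnergy L (g a · c))]
        ring

lemma poincare_cube (L : ℕ) (g : ℕ → ℕ → ℕ → ℝ) :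
    2 * L ^ 3 * ∑ a ∈ range L, ∑ b ∈ range L, ∑ c ∈ range L, g a b c ^ 2
      - 2 * (∑ a ∈ range L, ∑ b ∈ range L, ∑ c ∈ range L, g a b c) ^ 2
      ≤ 3 * L ^ 5 * cubeEnergy L g := by
  have h := sum_sum_sub_sq (range L ×ˢ range L ×ˢ range L) fun p => g p.1 p.2.1 p.2.2
  simp only [sum_product, card_product, card_range] at h
  push_cast at h
  rw [show (L : ℝ) ^ 3 = L * (L * L) by ring, ← h]
  exact sum_sub_sq_le_cubeEnergy L g

lemma mem_cubeBox {L : ℕ} {x : Fin 3 → ℤ} : x ∈ cubeBox L ↔ ∀ i, 0 ≤ x i ∧ x i < L := by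
  simp only [cubeBox, mem_image, mem_univ, true_and]
  constructor
  · rintro ⟨t, rfl⟩ i
    exact ⟨by positivity, Int.ofNat_lt.mpr (t i).isLt⟩
  · intro h
    exact ⟨fun i => ⟨(x i).toNat, by have := h i; omega⟩, funext fun i => by simp [(h i).1]⟩

lemma cubeBox_eq_image (L : ℕ) :
    cubeBox L = (range L ×ˢ range L ×ˢ range L).image
      fun p : ℕ × ℕ × ℕ => ![(p.1 : ℤ), p.2.1, p.2.2] := by
  ext x
  simp only [mem_cubeBox, mem_image, mem_product, mem_range, Prod.exists]
  constructor
  · intro h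
    refine ⟨(x 0).toNat, (x 1).toNat, (x 2).toNat, ⟨?_, ?_, ?_⟩, funext fun i => ?_⟩
    · have := h 0; omega
    · have := h 1; omega
    · have := h 2; omega
    · fin_cases i <;> simp [(h _).1]
  · rintro ⟨a, b, c, ⟨ha, hb, hc⟩, rfl⟩ i
    fin_cases i <;> simp <;> omega

lemma sum_cubeBox (L : ℕ) (F : (Fin 3 → ℤ) → ℝ) :
    ∑ x ∈ cubeBox L, F x = ∑ a ∈ range L, ∑ b ∈ range L, ∑ c ∈ range L, F ![(a : ℤ), b, c] := by
  rw [cubeBox_eq_image, sum_image, sum_product]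
  · simp only [sum_product]
  · intro p _ q _ h
    simpa [Prod.ext_iff] using h

lemma add_unitVec_mem_cubeBox {L : ℕ} {x : Fin 3 → ℤ} (hx : x ∈ cubeBox L) (μ : Fin 3) :
    x + unitVec μ ∈ cubeBox L ↔ x μ + 1 < L := by
  rw [mem_cubeBox] at hx ⊢
  constructor
  · intro h; simpa [unitVec] using (h μ).2
  · intro h i
    by_cases hi : i = μ
    · subst hi; simp only [Pi.add_apply, unitVec, if_pos]; have := hx i; omega
    · simpa [unitVec, hi] using hx i

lemma sum_range_ite_add_one_lt (L : ℕ) (G : ℕ → ℝ) :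
    ∑ k ∈ range L, (if (k : ℤ) + 1 < L then G k else 0) = ∑ k ∈ range (L - 1), G k := by
  rw [← sum_filter]
  congr 1
  ext k
  simp only [mem_filter, mem_range]
  omega

lemma sum_filter_add_unitVec_mem (L : ℕ) (μ : Fin 3) (F : (Fin 3 → ℤ) → ℝ) :
    ∑ x ∈ (cubeBox L).filter (fun x => x + unitVec μ ∈ cubeBox L), F x =
      ∑ x ∈ cubeBox L, if x μ + 1 < L then F x else 0 := by
  rw [sum_filter]
  exact sum_congr rfl fun x hx => if_congr (add_unitVec_mem_cubeBox hx μ) rfl rfl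

lemma vecCons_add_unitVec (a b c : ℤ) :
    ![a, b, c] + unitVec 0 = ![a + 1, b, c] ∧ ![a, b, c] + unitVec 1 = ![a, b + 1, c] ∧
      ![a, b, c] + unitVec 2 = ![a, b, c + 1] := by
  refine ⟨?_, ?_, ?_⟩ <;> funext i <;> fin_cases i <;> simp [unitVec]

lemma neumannEnergy_eq_cubeEnergy (L : ℕ) (f : (Fin 3 → ℤ) → ℝ) :
    ∑ μ : Fin 3, ∑ x ∈ (cubeBox L).filter (fun x => x + unitVec μ ∈ cubeBox L),
        (f (x + unitVec μ) - f x) ^ 2 = cubeEnergy L fun a b c => f ![(a : ℤ), b, c] := by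
  simp only [Fin.sum_univ_three, sum_filter_add_unitVec_mem, sum_cubeBox, cubeEnergy, lineEnergy,
    vecCons_add_unitVec]
  push_cast
  congr 1; congr 1
  · rw [sum_comm]
    refine sum_congr rfl fun b _ => ?_
    rw [sum_comm]
    exact sum_congr rfl fun c _ => sum_range_ite_add_one_lt L _
  · refine sum_congr rfl fun a _ => ?_
    rw [sum_comm]
    exact sum_congr rfl fun c _ => sum_range_ite_add_one_lt L _
  · exact sum_congr rfl fun a _ => sum_congr rfl fun b _ => sum_range_ite_add_one_lt L _

lemma min_mul_le_of_poincare {L a E Q S : ℝ} (hL : 0 < L) (ha : 0 < a) (hE : 0 ≤ E)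
    (h : 2 * L ^ 3 * Q - 2 * S ^ 2 ≤ 3 * L ^ 5 * E) :
    min (2 / 3) a * (L ^ 2)⁻¹ * Q ≤ E + a * L * ((L ^ 3)⁻¹ * S) ^ 2 := by
  have hQ : (L ^ 2)⁻¹ * Q ≤ 3 / 2 * E + S ^ 2 / L ^ 5 := by
    rw [inv_mul_le_iff₀ (by positivity)]
    have : L ^ 2 * (3 / 2 * E + S ^ 2 / L ^ 5) = (3 * L ^ 5 * E + 2 * S ^ 2) / (2 * L ^ 3) := by
      field_simp
    rw [this, le_div_iff₀ (by positivity)]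
    linarith
  have hm : 0 ≤ min (2 / 3) a := le_min (by norm_num) ha.le
  calc min (2 / 3) a * (L ^ 2)⁻¹ * Q ≤ min (2 / 3) a * (3 / 2 * E + S ^ 2 / L ^ 5) := by
        rw [mul_assoc]; gcongr
    _ ≤ 2 / 3 * (3 / 2 * E) + a * (S ^ 2 / L ^ 5) := by
        rw [mul_add]; gcongr
        · exact min_le_left _ _
        · exact min_le_right _ _
    _ = E + a * L * ((L ^ 3)⁻¹ * S) ^ 2 := by
        field_simp

/-- lower bound on the Neumann Dirichlet form plus mean-squared term
on an `L`-cube: `E(f) + a·L·m(f)² ≥ min(c₀,a)·L⁻²·Σ_{x∈B} f(x)²` with a universal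
constant `c₀`. -/
theorem neumann_cube_lower_bound :
    ∃ c₀ : ℝ, 0 < c₀ ∧ ∀ L : ℕ, 0 < L → ∀ a : ℝ, 0 < a → ∀ f : (Fin 3 → ℤ) → ℝ,
      min c₀ a * ((L : ℝ) ^ 2)⁻¹ * ∑ x ∈ cubeBox L, f x ^ 2 ≤
      (∑ μ : Fin 3, ∑ x ∈ (cubeBox L).filter (fun x => x + unitVec μ ∈ cubeBox L),
          (f (x + unitVec μ) - f x) ^ 2) +
        a * (L : ℝ) * (((L : ℝ) ^ 3)⁻¹ * ∑ x ∈ cubeBox L, f x) ^ 2 := by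
  refine ⟨2 / 3, by norm_num, fun L hL a ha f => ?_⟩
  rw [neumannEnergy_eq_cubeEnergy, sum_cubeBox L fun x => f x ^ 2, sum_cubeBox L f]
  exact min_mul_le_of_poincare (by exact_mod_cast hL) ha (cubeEnergy_nonneg L _)
    (poincare_cube L _)
end

section
/- Let P ⊆ S and γ ≥ 0 with 4γ·‖C‖ ≤ 1, where ‖C‖ is the operator norm (largest eigenvalue) of C. Then ∫_{ℝ^S} exp(γ·Σ_{x∈P} A_x²) dμ_C(A) ≤ exp(2γ·Σ_{x∈P} C_{xx}). -/
/-!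
Multiplying the density of `μ_C` by `exp (γ ∑_{x∈P} A_x²) = exp (½ ⟨A, 2γ D A⟩)`, where `D` is the
diagonal projection onto the coordinates in `P`, gives an unnormalised Gaussian with precision
matrix `M = C⁻¹ - 2γ D`, which is positive definite since `C⁻¹ ≥ ‖C‖⁻¹ > 2γ ≥ 2γ D` in the
Loewner order. Hence the integral is
`det (C M)^{-1/2} = det (1 - 2γ C D)^{-1/2} = det (1 - N)^{-1/2}` with `N = 2γ D C D`
(Sylvester's identity and `D² = D`). The eigenvalues of `N` lie in
`[0, ‖N‖] ⊆ [0, 1/2]`, where `1 - t ≥ exp (-2t)`, so `det (1 - N) ≥ exp (-2 tr N)`.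
-/

open MeasureTheory Matrix

theorem Real.exp_neg_two_mul_le_one_sub {t : ℝ} (ht₀ : 0 ≤ t) (ht : t ≤ 1 / 2) :
    Real.exp (-(2 * t)) ≤ 1 - t := by
  rw [Real.exp_neg, inv_le_iff_one_le_mul₀ (Real.exp_pos _)]
  nlinarith [Real.add_one_le_exp (2 * t)]

theorem integral_exp_neg_half_dotProduct_self {n : Type*} [Fintype n] :
    ∫ y : n → ℝ, Real.exp (-(1 / 2) * (y ⬝ᵥ y)) = √(2 * Real.pi) ^ Fintype.card n := by
  have h (y : n → ℝ) : Real.exp (-(1 / 2) * (y ⬝ᵥ y)) = ∏ i, Real.exp (-(1 / 2) * y i ^ 2) := by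
    rw [← Real.exp_sum, dotProduct, Finset.mul_sum]
    simp only [sq]
  simp_rw [h]
  rw [integral_fintype_prod_volume_eq_pow (fun t => Real.exp (-(1 / 2) * t ^ 2)),
    integral_gaussian]
  congr 2
  field_simp

namespace Matrix

open scoped Matrix.Norms.L2Operator MatrixOrder

section CoordProj

variable {n : Type*} [DecidableEq n]

def coordProj (P : Finset n) : Matrix n n ℝ :=
  diagonal fun x => if x ∈ P then 1 else 0

theorem coordProj_le_one (P : Finset n) : coordProj P ≤ 1 := by
  rw [Matrix.le_iff, coordProj, ← diagonal_one, diagonal_sub]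
  exact PosSemidef.diagonal fun x => by split_ifs <;> norm_num

variable [Fintype n]

theorem isStarProjection_coordProj (P : Finset n) : IsStarProjection (coordProj P) where
  isIdempotentElem := by simp [IsIdempotentElem, coordProj, diagonal_mul_diagonal]
  isSelfAdjoint := isHermitian_diagonal _

theorem dotProduct_coordProj_mulVec (P : Finset n) (A : n → ℝ) :
    A ⬝ᵥ coordProj P *ᵥ A = ∑ x ∈ P, A x ^ 2 := by
  simp [coordProj, dotProduct, mulVec_diagonal, Finset.sum_ite_mem, sq]

theorem trace_coordProj_mul_mul_coordProj (P : Finset n) (C : Matrix n n ℝ) :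
    (coordProj P * C * coordProj P).trace = ∑ x ∈ P, C x x := by
  simp [coordProj, trace, diagonal_mul, mul_diagonal, Finset.sum_ite_mem]

theorem norm_coordProj_mul_mul_coordProj_le (P : Finset n) (C : Matrix n n ℝ) :
    ‖coordProj P * C * coordProj P‖ ≤ ‖C‖ := by
  have hD := (isStarProjection_coordProj P).norm_le
  calc ‖coordProj P * C * coordProj P‖ ≤ ‖coordProj P‖ * ‖C‖ * ‖coordProj P‖ := norm_mul₃_le
    _ ≤ 1 * ‖C‖ * 1 := by gcongr
    _ = ‖C‖ := by ring

end CoordProj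

variable {n : Type*} [Fintype n] [DecidableEq n]

theorem det_one_sub_mul_of_isIdempotentElem {R : Type*} [CommRing R] (C : Matrix n n R)
    {D : Matrix n n R} (hD : IsIdempotentElem D) : (1 - C * D).det = (1 - D * C * D).det := by
  conv_lhs => rw [← hD.eq, ← Matrix.mul_assoc, det_one_sub_mul_comm]
  rw [Matrix.mul_assoc]

theorem IsHermitian.det_one_sub {N : Matrix n n ℝ} (hN : N.IsHermitian) :
    (1 - N).det = ∏ i, (1 - hN.eigenvalues i) := by
  simpa [hN.charpoly_eq, Polynomial.eval_prod] using (eval_charpoly N 1).symm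

theorem IsHermitian.eigenvalues_le_norm [Nonempty n] {N : Matrix n n ℝ} (hN : N.IsHermitian)
    (i : n) : hN.eigenvalues i ≤ ‖N‖ :=
  (Real.le_norm_self _).trans (spectrum.norm_le_norm_of_mem (hN.eigenvalues_mem_spectrum_real i))

theorem PosSemidef.exp_neg_two_mul_trace_le_det_one_sub [Nonempty n] {N : Matrix n n ℝ}
    (hN : N.PosSemidef) (hnorm : ‖N‖ ≤ 1 / 2) : Real.exp (-(2 * N.trace)) ≤ (1 - N).det := by
  rw [hN.1.det_one_sub, hN.1.trace_eq_sum_eigenvalues, Finset.mul_sum, ← Finset.sum_neg_distrib,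
    Real.exp_sum]
  exact Finset.prod_le_prod (fun i _ => (Real.exp_pos _).le) fun i _ =>
    Real.exp_neg_two_mul_le_one_sub (hN.eigenvalues_nonneg i)
      ((hN.1.eigenvalues_le_norm i).trans hnorm)

theorem PosSemidef.inv_sqrt_det_one_sub_le_exp_trace [Nonempty n] {N : Matrix n n ℝ}
    (hN : N.PosSemidef) (hnorm : ‖N‖ ≤ 1 / 2) : (√(1 - N).det)⁻¹ ≤ Real.exp N.trace := by
  have h := Real.sqrt_le_sqrt (hN.exp_neg_two_mul_trace_le_det_one_sub hnorm)
  rw [show -(2 * N.trace) = -N.trace + -N.trace by ring, Real.exp_add,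
    Real.sqrt_mul_self (Real.exp_pos _).le, Real.exp_neg] at h
  simpa using inv_anti₀ (by positivity) h

theorem PosDef.inv_sqrt_det_one_sub_mul_smul_coordProj_le [Nonempty n] {C : Matrix n n ℝ}
    (hC : C.PosDef) (P : Finset n) {s : ℝ} (hs : 0 ≤ s) (hsC : s * ‖C‖ ≤ 1 / 2) :
    (√(1 - C * (s • coordProj P)).det)⁻¹ ≤ Real.exp (s * ∑ x ∈ P, C x x) := by
  set D := coordProj P
  have hN : (D * (s • C) * D).PosSemidef := by
    simpa [D, coordProj, diagonal_transpose] using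
      (hC.posSemidef.smul hs).mul_mul_conjTranspose_same D
  have hNnorm : ‖D * (s • C) * D‖ ≤ 1 / 2 := by
    refine (norm_coordProj_mul_mul_coordProj_le P _).trans ?_
    rwa [norm_smul, Real.norm_of_nonneg hs]
  rw [Matrix.mul_smul, ← Matrix.smul_mul, det_one_sub_mul_of_isIdempotentElem _
    (isStarProjection_coordProj P).isIdempotentElem]
  simpa [D, trace_coordProj_mul_mul_coordProj, Finset.mul_sum] using
    hN.inv_sqrt_det_one_sub_le_exp_trace hNnorm

theorem PosDef.algebraMap_inv_norm_le_inv [Nonempty n] {C : Matrix n n ℝ} (hC : C.PosDef) :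
    algebraMap ℝ _ ‖C‖⁻¹ ≤ C⁻¹ := by
  have hpos : IsStrictlyPositive C := isStrictlyPositive_iff_posDef.mpr hC
  have hinv : cfc (fun x : ℝ => x⁻¹) C = C⁻¹ := by
    simpa [Matrix.coe_units_inv] using cfc_inv_id (R := ℝ) hC.isUnit.unit
  rw [← hinv]
  refine algebraMap_le_cfc _ _ _ (fun x hx => ?_) ?_
  · exact inv_anti₀ (hpos.spectrum_pos hx)
      ((Real.le_norm_self x).trans (spectrum.norm_le_norm_of_mem hx))
  · exact continuousOn_inv₀.mono fun x hx => (hpos.spectrum_pos hx).ne'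

theorem PosDef.inv_sub_smul_of_le_one [Nonempty n] {C Q : Matrix n n ℝ} (hC : C.PosDef) (hQ : Q ≤ 1)
    {s : ℝ} (hs : 0 ≤ s) (hsC : s * ‖C‖ < 1) : (C⁻¹ - s • Q).PosDef := by
  have hC₀ : 0 < ‖C‖ := norm_pos_iff.mpr hC.isUnit.ne_zero
  have hc : 0 < ‖C‖⁻¹ - s := by
    rw [sub_pos, ← one_div]
    exact (lt_div_iff₀ hC₀).mpr hsC
  have hle : algebraMap ℝ _ (‖C‖⁻¹ - s) ≤ C⁻¹ - s • Q := by
    rw [map_sub, Algebra.algebraMap_eq_smul_one s]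
    exact sub_le_sub hC.algebraMap_inv_norm_le_inv (smul_le_smul_of_nonneg_left hQ hs)
  have hgap : (C⁻¹ - s • Q - (‖C‖⁻¹ - s) • 1).PosSemidef := by
    rw [← Algebra.algebraMap_eq_smul_one]
    exact Matrix.le_iff.mp hle
  rw [← sub_add_cancel (C⁻¹ - s • Q) ((‖C‖⁻¹ - s) • 1)]
  exact PosDef.posSemidef_add hgap (PosDef.one.smul hc)

theorem integral_comp_mulVec {E : Type*} [NormedAddCommGroup E] [NormedSpace ℝ E]
    {B : Matrix n n ℝ} (hB : B.det ≠ 0) (g : (n → ℝ) → E) :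
    ∫ x, g (B *ᵥ x) = |B.det|⁻¹ • ∫ y, g y := by
  let e := (B.toLinearEquiv' (B.invertibleOfIsUnitDet (isUnit_iff_ne_zero.mpr hB)))
    |>.toContinuousLinearEquiv
  have hmap := e.toHomeomorph.measurableEmbedding.integral_map (μ := volume) g
  have he : ⇑e.toHomeomorph = toLin' B := rfl
  rw [he, Real.map_matrix_volume_pi_eq_smul_volume_pi hB, integral_smul_measure,
    ENNReal.toReal_ofReal (abs_nonneg _)] at hmap
  simpa only [abs_inv, toLin'_apply] using hmap.symm

theorem PosDef.integral_exp_neg_half_dotProduct_mulVec {M : Matrix n n ℝ} (hM : M.PosDef) :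
    ∫ x, Real.exp (-(1 / 2) * (x ⬝ᵥ M *ᵥ x)) = √(2 * Real.pi) ^ Fintype.card n / √M.det := by
  set B := CFC.sqrt M
  have hBt : Bᵀ = B := by
    rw [← conjTranspose_eq_transpose_of_trivial]
    exact (CFC.sqrt_nonneg M).isSelfAdjoint
  have hdet : B.det = √M.det := by simpa using hM.posSemidef.det_sqrt
  have hdet₀ : 0 < √M.det := Real.sqrt_pos.mpr hM.det_pos
  have hquad (x : n → ℝ) : x ⬝ᵥ M *ᵥ x = (B *ᵥ x) ⬝ᵥ (B *ᵥ x) := by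
    rw [← CFC.sqrt_mul_sqrt_self M (nonneg_iff_posSemidef.mpr hM.posSemidef), ← mulVec_mulVec,
      dotProduct_mulVec, ← mulVec_transpose, hBt]
  simp_rw [hquad]
  rw [integral_comp_mulVec (hdet ▸ hdet₀.ne') fun y => Real.exp (-(1 / 2) * (y ⬝ᵥ y)),
    integral_exp_neg_half_dotProduct_self, hdet, abs_of_pos hdet₀, smul_eq_mul, inv_mul_eq_div]

theorem PosDef.integral_exp_quadratic_mul_gaussianDensity {C Q : Matrix n n ℝ} (hC : C.PosDef)
    (hQ : (C⁻¹ - Q).PosDef) :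
    ∫ A : n → ℝ, Real.exp (1 / 2 * (A ⬝ᵥ Q *ᵥ A)) *
        ((√((2 * Real.pi) • C).det)⁻¹ * Real.exp (-(1 / 2) * (A ⬝ᵥ C⁻¹ *ᵥ A))) =
      (√(1 - C * Q).det)⁻¹ := by
  have hexp (A : n → ℝ) : Real.exp (1 / 2 * (A ⬝ᵥ Q *ᵥ A)) *
      ((√((2 * Real.pi) • C).det)⁻¹ * Real.exp (-(1 / 2) * (A ⬝ᵥ C⁻¹ *ᵥ A))) =
      (√((2 * Real.pi) • C).det)⁻¹ * Real.exp (-(1 / 2) * (A ⬝ᵥ (C⁻¹ - Q) *ᵥ A)) := by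
    rw [mul_left_comm, ← Real.exp_add, sub_mulVec, dotProduct_sub]
    ring_nf
  have hCQ : 1 - C * Q = C * (C⁻¹ - Q) := by
    rw [Matrix.mul_sub, mul_nonsing_inv C (isUnit_iff_ne_zero.mpr hC.det_pos.ne')]
  have h2π : √((2 * Real.pi) ^ Fintype.card n) = √(2 * Real.pi) ^ Fintype.card n := by
    rw [Real.sqrt_eq_iff_mul_self_eq (by positivity) (by positivity), ← mul_pow,
      Real.mul_self_sqrt (by positivity)]
  have hC₀ := hC.det_pos
  have hQ₀ := hQ.det_pos
  simp_rw [hexp]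
  rw [integral_const_mul, hQ.integral_exp_neg_half_dotProduct_mulVec, hCQ, det_mul, det_smul,
    Real.sqrt_mul (by positivity), Real.sqrt_mul hC₀.le, h2π]
  field_simp

end Matrix

/-- exponential moment bound for a Gaussian measure:
if `4γ‖C‖ ≤ 1` (operator norm = largest eigenvalue of the covariance `C`), then
`∫ e^{γ Σ_{x∈P} A_x²} dμ_C(A) ≤ e^{2γ Σ_{x∈P} C_{xx}}`. -/
theorem gaussian_exponential_moment {S : Type*} [Fintype S] [Nonempty S] [DecidableEq S]
    (C : Matrix S S ℝ) (hC : C.PosDef) (P : Finset S) (γ : ℝ) (hγ : 0 ≤ γ)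
    (hnorm : 4 * γ * ‖Matrix.toEuclideanCLM (𝕜 := ℝ) C‖ ≤ 1) :
    (∫ A : S → ℝ, Real.exp (γ * ∑ x ∈ P, A x ^ 2) *
        ((Real.sqrt (((2 * Real.pi) • C).det))⁻¹ *
          Real.exp (-(1 / 2) * (A ⬝ᵥ C⁻¹.mulVec A)))) ≤
      Real.exp (2 * γ * ∑ x ∈ P, C x x) := by
  rw [← cstar_norm_def] at hnorm
  have hM : (C⁻¹ - (2 * γ) • coordProj P).PosDef :=
    hC.inv_sub_smul_of_le_one (coordProj_le_one P) (by positivity) (by linarith)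
  have hquad (A : S → ℝ) :
      γ * ∑ x ∈ P, A x ^ 2 = 1 / 2 * (A ⬝ᵥ ((2 * γ) • coordProj P) *ᵥ A) := by
    rw [smul_mulVec, dotProduct_smul, dotProduct_coordProj_mulVec, smul_eq_mul]
    ring
  simp_rw [hquad]
  rw [hC.integral_exp_quadratic_mul_gaussianDensity hM]
  exact hC.inv_sqrt_det_one_sub_mul_smul_coordProj_le P (by positivity) (by linarith)
end
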